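/- Let R be a fluid bisimulation between RLFTSs N and N′ with state types S, S′, let H₁,…,Hₙ be R-equivalence classes and a₁,…,aₙ actions, and let H₀ be the R-class of s₀. Then the sum, over all paths e₁,…,eₙ from s₀ such that L(eᵢ) = aᵢ and tgt(eᵢ) ∈ Hᵢ for all 1 ≤ i ≤ n, of the products ∏ᵢ Ω(eᵢ), equals ∏ᵢ RM_{aᵢ}(Hᵢ₋₁, Hᵢ), where RM_a(H, H̃) denotes the common value RM_a(s, H̃) for any s ∈ H (well-defined by the bisimulation condition). -/

import Mathlib

/-!
Splitting the selected paths from a state `M` by their first edge `e`, the sum of rate products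
becomes `∑ₑ Ω(e) · Σ(tgt e)`, where `Σ(tgt e)` is the corresponding sum for the remaining actions
and classes. By induction `Σ(tgt e)` is a product of `RM` values that, by the bisimulation
condition, depends only on the class `H₁ ∋ tgt e`; it factors out, and `∑ₑ Ω(e)` over the
admissible first edges is `RM_{a₁}(M, H₁)`.
-/

open scoped BigOperators

/-- A rated labeled fluid transition system (RLFTS) over a type `Act` of actions. -/
structure RLFTS (Act : Type) where
  S : Type
  E : Type
  s0 : S
  src : E → S
  tgt : E → S
  rate : E → ℝ
  label : E → Act
  RP : S → ℝ
  rate_pos : ∀ e, 0 < rate e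
  out_finite : ∀ s : S, {e : E | src e = s}.Finite
  out_nonempty : ∀ s : S, ∃ e : E, src e = s

namespace RLFTS

variable {Act : Type}

/-- Exit rate of a state. -/
noncomputable def RE (N : RLFTS Act) (s : N.S) : ℝ :=
  ∑ᶠ e ∈ {e : N.E | N.src e = s}, N.rate e

/-- Average sojourn time in a state. -/
noncomputable def SJ (N : RLFTS Act) (s : N.S) : ℝ := 1 / N.RE s

/-- Firing probability of an edge. -/
noncomputable def PTe (N : RLFTS Act) (e : N.E) : ℝ := N.rate e / N.RE (N.src e)

/-- `IsPathFrom N M es` : the list of edges `es` is a path starting in the state `M`. -/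
def IsPathFrom (N : RLFTS Act) : N.S → List N.E → Prop
  | _, [] => True
  | M, e :: es => N.src e = M ∧ IsPathFrom N (N.tgt e) es

/-- The list of states visited by a path starting in `M`. -/
def visits (N : RLFTS Act) : N.S → List N.E → List N.S
  | M, [] => [M]
  | M, e :: es => M :: visits N (N.tgt e) es

/-- Execution probability of a path. -/
noncomputable def pathPT (N : RLFTS Act) (es : List N.E) : ℝ := (es.map N.PTe).prod

/-- Cumulative execution probability of the `(σ,ς,ϱ)`-selected paths starting in `M`. -/
noncomputable def PTsel (N : RLFTS Act) (M : N.S) (σ : List Act) (ς ϱ : List ℝ) : ℝ :=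
  ∑ᶠ es ∈ {es : List N.E | IsPathFrom N M es ∧ es.map N.label = σ ∧
      (visits N M es).map N.SJ = ς ∧ (visits N M es).map N.RP = ϱ}, N.pathPT es

end RLFTS

namespace RLFTS

variable {Act : Type}

/-- Source map on the disjoint union of the edges of two RLFTSs. -/
def csrc (N N' : RLFTS Act) : N.E ⊕ N'.E → N.S ⊕ N'.S := Sum.map N.src N'.src

/-- Target map on the disjoint union of the edges of two RLFTSs. -/
def ctgt (N N' : RLFTS Act) : N.E ⊕ N'.E → N.S ⊕ N'.S := Sum.map N.tgt N'.tgt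

/-- Rate function on the disjoint union of the edges of two RLFTSs. -/
def crate (N N' : RLFTS Act) : N.E ⊕ N'.E → ℝ := Sum.elim N.rate N'.rate

/-- Labeling on the disjoint union of the edges of two RLFTSs. -/
def clabel (N N' : RLFTS Act) : N.E ⊕ N'.E → Act := Sum.elim N.label N'.label

/-- Fluid-rate function on the disjoint union of the states of two RLFTSs. -/
def cRP (N N' : RLFTS Act) : N.S ⊕ N'.S → ℝ := Sum.elim N.RP N'.RP

/-- Overall rate to move from the state `s` into the set of states `H` by action `a`,
in the disjoint union of two RLFTSs. -/
noncomputable def RMa (N N' : RLFTS Act) (a : Act) (s : N.S ⊕ N'.S)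
    (H : Set (N.S ⊕ N'.S)) : ℝ :=
  ∑ᶠ e ∈ {e : N.E ⊕ N'.E | csrc N N' e = s ∧ clabel N N' e = a ∧ ctgt N N' e ∈ H},
    crate N N' e

/-- `R` is a fluid bisimulation between the RLFTSs `N` and `N'`. -/
def FluidBisim (N N' : RLFTS Act) (R : (N.S ⊕ N'.S) → (N.S ⊕ N'.S) → Prop) : Prop :=
  Equivalence R ∧ R (Sum.inl N.s0) (Sum.inr N'.s0) ∧
    ∀ s1 s2, R s1 s2 → cRP N N' s1 = cRP N N' s2 ∧
      ∀ (a : Act) (s : N.S ⊕ N'.S), RMa N N' a s1 {v | R s v} = RMa N N' a s2 {v | R s v}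

/-- The RLFTSs `N` and `N'` are fluid bisimulation equivalent. -/
def FluidBisimEquiv (N N' : RLFTS Act) : Prop := ∃ R, FluidBisim N N' R

end RLFTS

theorem Fin.cons_castSucc_eq_dite {α : Type*} {n : ℕ} (s : α) (u : Fin n → α) (i : Fin n) :
    (Fin.cons s u : Fin (n + 1) → α) i.castSucc =
      if _ : (i : ℕ) = 0 then s
        else u ⟨(i : ℕ) - 1, Nat.lt_of_le_of_lt (Nat.sub_le _ _) i.isLt⟩ := by
  obtain ⟨_ | _, _⟩ := i <;> rfl

namespace RLFTS

variable {Act : Type}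

theorem finite_setOf_isPathFrom_length (N : RLFTS Act) (k : ℕ) (M : N.S) :
    {es : List N.E | N.IsPathFrom M es ∧ es.length = k}.Finite := by
  induction k generalizing M with
  | zero => exact (Set.finite_singleton []).subset fun es h => List.length_eq_zero_iff.mp h.2
  | succ k ih =>
    refine ((N.out_finite M).biUnion fun e _ => (ih (N.tgt e)).image (e :: ·)).subset ?_
    rintro (_ | ⟨e, es⟩) ⟨hpath, hlen⟩
    · simp at hlen
    · exact Set.mem_biUnion hpath.1 ⟨es, ⟨hpath.2, by simpa using hlen⟩, rfl⟩

section ClassPaths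

variable (N N' : RLFTS Act) (R : (N.S ⊕ N'.S) → (N.S ⊕ N'.S) → Prop)

theorem RMa_inl (a : Act) (M : N.S) (H : Set (N.S ⊕ N'.S)) :
    RMa N N' a (.inl M) H =
      ∑ᶠ e ∈ {e : N.E | N.src e = M ∧ N.label e = a ∧ .inl (N.tgt e) ∈ H}, N.rate e := by
  have hinl : {e : N.E ⊕ N'.E | csrc N N' e = .inl M ∧ clabel N N' e = a ∧ ctgt N N' e ∈ H} =
      Sum.inl '' {e | N.src e = M ∧ N.label e = a ∧ .inl (N.tgt e) ∈ H} := by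
    ext (e | e) <;> simp [csrc, clabel, ctgt]
  rw [RMa, hinl, finsum_mem_image Sum.inl_injective.injOn]
  rfl

def classEdges (M : N.S) (a : Act) (v : N.S ⊕ N'.S) : Set N.E :=
  {e | N.src e = M ∧ N.label e = a ∧ R v (.inl (N.tgt e))}

def classPaths (M : N.S) (as : List Act) (us : List (N.S ⊕ N'.S)) : Set (List N.E) :=
  {es | N.IsPathFrom M es ∧ es.map N.label = as ∧
    List.Forall₂ (fun e v => R v (.inl (N.tgt e))) es us}

/-- `classRateProd s [a₁,…,aₙ] [u₁,…,uₙ] = ∏ᵢ RM_{aᵢ}(uᵢ₋₁, [uᵢ])` with `u₀ = s`. -/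
noncomputable def classRateProd : N.S ⊕ N'.S → List Act → List (N.S ⊕ N'.S) → ℝ
  | s, a :: as, v :: us => RMa N N' a s {w | R v w} * classRateProd v as us
  | _, _, _ => 1

theorem classEdges_finite (M : N.S) (a : Act) (v : N.S ⊕ N'.S) :
    (classEdges N N' R M a v).Finite :=
  (N.out_finite M).subset fun _ h => h.1

theorem classPaths_finite (M : N.S) (as : List Act) (us : List (N.S ⊕ N'.S)) :
    (classPaths N N' R M as us).Finite :=
  (N.finite_setOf_isPathFrom_length as.length M).subset fun es h =>
    ⟨h.1, by rw [← h.2.1, List.length_map]⟩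

theorem classPaths_nil (M : N.S) : classPaths N N' R M [] [] = {[]} := by
  ext es
  constructor
  · exact fun h => List.map_eq_nil_iff.mp h.2.1
  · rintro rfl
    exact ⟨trivial, rfl, .nil⟩

theorem classPaths_cons (M : N.S) (a : Act) (as : List Act) (v : N.S ⊕ N'.S)
    (us : List (N.S ⊕ N'.S)) :
    classPaths N N' R M (a :: as) (v :: us) =
      ⋃ e ∈ classEdges N N' R M a v, (e :: ·) '' classPaths N N' R (N.tgt e) as us := by
  ext es
  simp only [Set.mem_iUnion, Set.mem_image, exists_prop]
  constructor
  · rintro ⟨hpath, hlabel, hclass⟩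
    obtain _ | ⟨e, es⟩ := es
    · cases hclass
    obtain ⟨hlabel_e, hlabel⟩ := List.cons_eq_cons.mp hlabel
    obtain _ | ⟨hclass_e, hclass⟩ := hclass
    exact ⟨e, ⟨hpath.1, hlabel_e, hclass_e⟩, es, ⟨hpath.2, hlabel, hclass⟩, rfl⟩
  · rintro ⟨e, he, es, ⟨hpath, hlabel, hclass⟩, rfl⟩
    exact ⟨⟨he.1, hpath⟩, by rw [List.map_cons, he.2.1, hlabel], .cons he.2.2 hclass⟩

variable {N N' R}

theorem classRateProd_congr (hR : FluidBisim N N' R) {s₁ s₂ : N.S ⊕ N'.S} (h : R s₁ s₂)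
    (as : List Act) (us : List (N.S ⊕ N'.S)) :
    classRateProd N N' R s₁ as us = classRateProd N N' R s₂ as us := by
  cases as <;> cases us <;> simp only [classRateProd, (hR.2.2 s₁ s₂ h).2]

theorem finsum_classPaths (hR : FluidBisim N N' R) (as : List Act) (us : List (N.S ⊕ N'.S))
    (hlen : as.length = us.length) (M : N.S) :
    ∑ᶠ es ∈ classPaths N N' R M as us, (es.map N.rate).prod =
      classRateProd N N' R (.inl M) as us := by
  induction as generalizing us M with
  | nil =>
    obtain rfl := List.length_eq_zero_iff.mp hlen.symm
    simp [classPaths_nil, classRateProd]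
  | cons a as ih =>
    obtain _ | ⟨v, us⟩ := us
    · simp at hlen
    have hdisj : (classEdges N N' R M a v).PairwiseDisjoint
        fun e => (e :: ·) '' classPaths N N' R (N.tgt e) as us := by
      intro e _ e' _ hne
      exact Set.disjoint_left.2 fun _ ⟨_, _, h⟩ ⟨_, _, h'⟩ =>
        hne (List.cons_eq_cons.mp (h.trans h'.symm)).1
    have hstep : ∀ e ∈ classEdges N N' R M a v,
        ∑ᶠ es ∈ (e :: ·) '' classPaths N N' R (N.tgt e) as us, (es.map N.rate).prod =
          N.rate e * classRateProd N N' R v as us := by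
      intro e he
      rw [finsum_mem_image List.cons_injective.injOn]
      simp only [List.map_cons, List.prod_cons]
      rw [← mul_finsum_mem, ih us (by simpa using hlen),
        classRateProd_congr hR (hR.1.symm he.2.2)]
    rw [classPaths_cons, finsum_mem_biUnion hdisj (classEdges_finite N N' R M a v)
      fun e _ => (classPaths_finite N N' R _ as us).image _, finsum_mem_congr rfl hstep,
      ← finsum_mem_mul, classRateProd, RMa_inl]
    rfl

theorem classRateProd_ofFn (s : N.S ⊕ N'.S) {n : ℕ} (a : Fin n → Act)
    (u : Fin n → N.S ⊕ N'.S) :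
    classRateProd N N' R s (List.ofFn a) (List.ofFn u) =
      ∏ i : Fin n, RMa N N' (a i) ((Fin.cons s u : Fin (n + 1) → N.S ⊕ N'.S) i.castSucc)
        {w | R (u i) w} := by
  induction n generalizing s with
  | zero => rfl
  | succ n ih =>
    rw [List.ofFn_succ, List.ofFn_succ, classRateProd, ih, Fin.prod_univ_succ]
    simp only [Fin.castSucc_zero, Fin.cons_zero, ← Fin.succ_castSucc, Fin.cons_succ]
    rw [← Fin.tail_def, Fin.cons_self_tail]

end ClassPaths

end RLFTS

theorem RLFTS.bisim_path_rate_product {Act : Type} (N N' : RLFTS Act)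
    (R : (N.S ⊕ N'.S) → (N.S ⊕ N'.S) → Prop) (hR : RLFTS.FluidBisim N N' R)
    (n : ℕ) (a : Fin n → Act) (u : Fin n → N.S ⊕ N'.S) :
    (∑ᶠ es ∈ {es : List N.E | RLFTS.IsPathFrom N N.s0 es ∧ es.map N.label = List.ofFn a ∧
        List.Forall₂ (fun e v => R v (Sum.inl (N.tgt e))) es (List.ofFn u)},
      (es.map N.rate).prod) =
    ∏ i : Fin n,
      RLFTS.RMa N N' (a i)
        (if _ : (i : ℕ) = 0 then Sum.inl N.s0
          else u ⟨(i : ℕ) - 1, Nat.lt_of_le_of_lt (Nat.sub_le _ _) i.isLt⟩)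
        {v | R (u i) v} := by
  calc _ = classRateProd N N' R (.inl N.s0) (List.ofFn a) (List.ofFn u) :=
        finsum_classPaths hR _ _ (by simp) N.s0
    _ = _ := by simp only [classRateProd_ofFn, Fin.cons_castSucc_eq_dite]
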